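/- arXiv:2010.05186 — 3 statements merged into one kernel-verified Lean document; each statement's English description precedes it below -/
import Mathlib

section
/- Let G be a graph with an even number n of vertices and m edges, and let H be constructed from G by taking two copies A, B of V(G), with edges a_u a_v and b_u b_v for each edge uv of G, plus all edges a_u b_v. If (V₁, V₂) is a bisection of G (|V₁| = |V₂| = n/2) with at most k crossing edges, then H admits a 2-coloring f with at least m - k + n²/4 red edges and at least m - k + n²/4 blue edges. -/
/-!
Colour `a_v` red and `b_v` blue for `v ∈ V₁`, and the other way round for `v ∈ V₂`. An edge of `G`
inside `V₁` or inside `V₂` then gives one red and one blue edge of `H`, one in each copy, and the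
`|V₁| |V₂| = n²/4` joins `a_u b_v` with `u ∈ V₁, v ∈ V₂` are red, those with `u ∈ V₂, v ∈ V₁` blue.
At most `k` edges of `G` cross the bisection, so at least `m - k` lie inside a part.
-/

open Finset

attribute [local instance] Classical.propDecidable

/-- The number of edges of `G` whose endpoints are all colored `c` by `f`. -/
noncomputable def monoEdges {V : Type*} [Fintype V] (G : SimpleGraph V)
    (f : V → Bool) (c : Bool) : ℕ :=
  (G.edgeFinset.filter fun e => ∀ v ∈ e, f v = c).card

/-- The number of edges of `G` with one endpoint in `S` and one endpoint in `T`. -/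
noncomputable def crossEdges {V : Type*} [Fintype V] (G : SimpleGraph V)
    (S T : Finset V) : ℕ :=
  (G.edgeFinset.filter fun e => ∃ u ∈ e, u ∈ S ∧ ∃ v ∈ e, v ∈ T).card

/-- The graph `H` built from `G`: two disjoint copies of `G` joined by all edges
between the two copies. -/
def biJoin {V : Type*} (G : SimpleGraph V) : SimpleGraph (V ⊕ V) where
  Adj x y :=
    match x, y with
    | .inl u, .inl v => G.Adj u v
    | .inr u, .inr v => G.Adj u v
    | .inl _, .inr _ => True
    | .inr _, .inl _ => True
  symm := by
    exact ⟨by rintro (u | u) (v | v) h <;> simp_all <;> exact G.adj_symm h⟩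
  loopless := by
    exact ⟨by rintro (u | u) h <;> exact G.irrefl h⟩

open Sum

section
variable {V : Type*} (G : SimpleGraph V)

@[simp] lemma biJoin_adj_inl_inl (u v : V) : (biJoin G).Adj (inl u) (inl v) ↔ G.Adj u v := .rfl
@[simp] lemma biJoin_adj_inr_inr (u v : V) : (biJoin G).Adj (inr u) (inr v) ↔ G.Adj u v := .rfl
@[simp] lemma biJoin_adj_inl_inr (u v : V) : (biJoin G).Adj (inl u) (inr v) := trivial

def biJoinEdge : (Sym2 V ⊕ Sym2 V) ⊕ (V × V) → Sym2 (V ⊕ V)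
  | .inl (.inl e) => e.map inl
  | .inl (.inr e) => e.map inr
  | .inr (u, v) => s(inl u, inr v)

lemma biJoinEdge_injective : Function.Injective (biJoinEdge (V := V)) := by
  rintro ((⟨x, y⟩ | ⟨x, y⟩) | ⟨x, y⟩) ((⟨x', y'⟩ | ⟨x', y'⟩) | ⟨x', y'⟩) h <;>
    simp_all [biJoinEdge]

variable [Fintype V]

lemma monoEdges_not (g : V → Bool) (c : Bool) :
    monoEdges G (fun v => !g v) c = monoEdges G g (!c) := by
  simp only [monoEdges, Bool.not_eq_eq_eq_not]

lemma monoEdges_add_monoEdges_add_crossEdges (g : V → Bool) :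
    monoEdges G g true + monoEdges G g false
      + crossEdges G {v | g v = true} {v | g v = false} = #G.edgeFinset := by
  simp only [monoEdges, crossEdges, card_filter]
  rw [card_eq_sum_ones, ← sum_add_distrib, ← sum_add_distrib]
  refine sum_congr rfl fun e _ => ?_
  induction e using Sym2.ind with
  | h x y => cases hx : g x <;> cases hy : g y <;> simp [hx, hy]

lemma le_monoEdges_biJoin (f : V ⊕ V → Bool) (c : Bool) :
    monoEdges G (f ∘ inl) c + monoEdges G (f ∘ inr) c
      + #{u | f (inl u) = c} * #{v | f (inr v) = c} ≤ monoEdges (biJoin G) f c := by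
  let s := ((G.edgeFinset.filter fun e => ∀ v ∈ e, f (inl v) = c).disjSum
    (G.edgeFinset.filter fun e => ∀ v ∈ e, f (inr v) = c)).disjSum
    (({u | f (inl u) = c} : Finset V) ×ˢ ({v | f (inr v) = c} : Finset V))
  calc _ = #s := by simp [s, monoEdges]
    _ ≤ _ := by
      refine card_le_card_of_injOn biJoinEdge ?_ biJoinEdge_injective.injOn
      rintro ((⟨x, y⟩ | ⟨x, y⟩) | ⟨x, y⟩) ha <;> simp_all [s, biJoinEdge]

lemma le_monoEdges_biJoin_elim_not (g : V → Bool) (c : Bool) :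
    monoEdges G g true + monoEdges G g false + #{v | g v = true} * #{v | g v = false}
      ≤ monoEdges (biJoin G) (Sum.elim g fun v => !g v) c := by
  have h := le_monoEdges_biJoin G (Sum.elim g fun v => !g v) c
  simp only [monoEdges_not, Sum.elim_comp_inl, Sum.elim_comp_inr, Sum.elim_inl, Sum.elim_inr] at h
  cases c
  · simp only [Bool.not_false, Bool.not_eq_false'] at h
    rwa [add_comm (monoEdges G g false), mul_comm] at h
  · simp only [Bool.not_true, Bool.not_eq_true'] at h
    exact h

end

theorem bisection_to_load_coloring {V : Type*} [Fintype V] (G : SimpleGraph V)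
    (k : ℕ) (hn : Even (Fintype.card V))
    (V₁ V₂ : Finset V) (hdisj : Disjoint V₁ V₂) (hunion : V₁ ∪ V₂ = Finset.univ)
    (h₁ : V₁.card = Fintype.card V / 2) (h₂ : V₂.card = Fintype.card V / 2)
    (hcross : crossEdges G V₁ V₂ ≤ k) :
    ∃ f : V ⊕ V → Bool,
      monoEdges (biJoin G) f true ≥
        G.edgeFinset.card - k + Fintype.card V ^ 2 / 4 ∧
      monoEdges (biJoin G) f false ≥
        G.edgeFinset.card - k + Fintype.card V ^ 2 / 4 := by
  let g : V → Bool := fun v => v ∈ V₁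
  have hg₁ : ({v | g v = true} : Finset V) = V₁ := by ext; simp [g]
  have hg₂ : ({v | g v = false} : Finset V) = V₂ := by
    rw [← (IsCompl.of_eq hdisj.eq_bot hunion).compl_eq]; ext; simp [g]
  have hsq : Fintype.card V ^ 2 / 4 = Fintype.card V / 2 * (Fintype.card V / 2) := by
    rw [Nat.div_mul_div_comm hn.two_dvd hn.two_dvd, sq]; rfl
  have hsplit := monoEdges_add_monoEdges_add_crossEdges G g
  rw [hg₁, hg₂] at hsplit
  refine ⟨Sum.elim g fun v => !g v, ?_, ?_⟩
  all_goals
    refine le_trans ?_ (le_monoEdges_biJoin_elim_not G g _)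
    rw [hg₁, hg₂, h₁, h₂]
    omega
end

section
/- Let G be a graph with m edges and H the bipartite graph obtained by taking a vertex x_v for each v ∈ V(G), a vertex y_e for each e ∈ E(G) adjacent to x_u and x_v when e = uv, and m² pendant vertices z^1_e, ..., z^{m²}_e attached to each y_e. If G has a 2-coloring with at least k₁ red edges and at least k₂ blue edges (k₂ ≥ k₁, and we may assume exactly k₁ red and k₂ blue), then H has a 2-coloring with at least 2k₁ + k₁m² red edges and at least (m + k₂ - k₁) + (m - k₁)m² blue edges. -/
open Finset

attribute [local instance] Classical.propDecidable

/-- The bipartite reduction graph `H`: a vertex `x_v` for each vertex `v` of `G`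
(the `inl` part), a vertex `y_e` for each edge `e` of `G` (the `inr ∘ inl` part)
adjacent to the `x`-vertices of its two endpoints, and `m²` pendant leaves attached
to each `y_e` (the `inr ∘ inr` part), where `m` is the number of edges of `G`. -/
noncomputable def bipRed {V : Type*} [Fintype V] (G : SimpleGraph V) :
    SimpleGraph (V ⊕ (↥G.edgeSet ⊕ ↥G.edgeSet × Fin (G.edgeFinset.card ^ 2))) where
  Adj x y :=
    match x, y with
    | .inl u, .inr (.inl e) => u ∈ (e : Sym2 V)
    | .inr (.inl e), .inl u => u ∈ (e : Sym2 V)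
    | .inr (.inl e), .inr (.inr (e', _)) => e = e'
    | .inr (.inr (e', _)), .inr (.inl e) => e = e'
    | _, _ => False
  symm := by
    constructor
    rintro (u | e | ⟨e, i⟩) (v | e' | ⟨e', j⟩) h <;> simp_all
  loopless := by
    constructor
    rintro (u | e | ⟨e, i⟩) h <;> simp_all

/-! Colour `x_v` like `v`, and `y_e` together with its leaves red exactly when `e` is red.
The vertices `y_e` are pairwise non-adjacent in `H`, so monochromatic edges of `H` can be
counted separately at each `y_e`. A red `y_e` has two red `x`-neighbours and `m²` red leaves;
a blue `y_e` has `m²` blue leaves and at least one blue `x`-neighbour, two when `e` is blue.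
Summing gives `(2 + m²) k₁` red and `(m - k₁)(1 + m²) + k₂` blue edges. -/

lemma Sym2.card_filter_toFinset_of_forall {α : Type*} [DecidableEq α] {e : Sym2 α}
    (he : ¬ e.IsDiag) {p : α → Prop} [DecidablePred p] (h : ∀ v ∈ e, p v) :
    #{v ∈ e.toFinset | p v} = 2 := by
  rw [filter_true_of_mem fun v hv => h v (Sym2.mem_toFinset.1 hv),
    Sym2.card_toFinset_of_not_isDiag _ he]

lemma Sym2.one_add_ite_le_card_filter_toFinset {α : Type*} [DecidableEq α] {e : Sym2 α}
    (he : ¬ e.IsDiag) {p : α → Prop} [DecidablePred p] [Decidable (∀ v ∈ e, p v)]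
    (h : ∃ v ∈ e, p v) : 1 + (if ∀ v ∈ e, p v then 1 else 0) ≤ #{v ∈ e.toFinset | p v} := by
  split_ifs with hall
  · rw [Sym2.card_filter_toFinset_of_forall he hall]
  · obtain ⟨v, hv, hp⟩ := h
    exact card_pos.2 ⟨v, mem_filter.2 ⟨Sym2.mem_toFinset.2 hv, hp⟩⟩

section MonoEdges

variable {W : Type*} [Fintype W] (H : SimpleGraph W) (g : W → Bool) (c : Bool)

/-- An edge meets an independent set at most once, so the stars of its vertices are disjoint. -/
lemma sum_card_monoNeighbors_le_monoEdges (S : Finset W)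
    (hS : (S : Set W).Pairwise fun s t => ¬ H.Adj s t) (hSc : ∀ s ∈ S, g s = c) :
    ∑ s ∈ S, #{t | H.Adj s t ∧ g t = c} ≤ monoEdges H g c := by
  rw [← card_sigma]
  refine card_le_card_of_injOn (fun p => s(p.1, p.2)) ?_ ?_
  · rintro ⟨s, t⟩ hp
    simp only [coe_sigma, Set.mem_sigma_iff, mem_coe, mem_filter, mem_univ, true_and] at hp
    simp only [mem_coe, mem_filter, SimpleGraph.mem_edgeFinset, SimpleGraph.mem_edgeSet,
      Sym2.ball]
    exact ⟨hp.2.1, hSc s hp.1, hp.2.2⟩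
  · rintro ⟨s, t⟩ hp ⟨s', t'⟩ hp' h
    simp only [coe_sigma, Set.mem_sigma_iff, mem_coe, mem_filter, mem_univ, true_and] at hp hp'
    rcases Sym2.eq_iff.1 h with ⟨rfl, rfl⟩ | ⟨-, rfl⟩
    · rfl
    · by_cases hss : s = t
      · subst hss; exact absurd hp.2.1 (H.loopless.irrefl _)
      · exact absurd hp.2.1 (hS hp.1 hp'.1 hss)

end MonoEdges

section BipRed

variable {V : Type*} [Fintype V] (G : SimpleGraph V)

lemma card_filter_edgeSet_eq_monoEdges (f : V → Bool) (c : Bool) :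
    #{e : G.edgeSet | ∀ v ∈ (e : Sym2 V), f v = c} = monoEdges G f c := by
  rw [monoEdges, ← card_map (Function.Embedding.subtype _)]
  congr 1
  ext e
  simp [and_comm]

lemma card_monoNeighbors_bipRed
    (g : V ⊕ (↥G.edgeSet ⊕ ↥G.edgeSet × Fin (G.edgeFinset.card ^ 2)) → Bool)
    (hg : ∀ e i, g (.inr (.inr (e, i))) = g (.inr (.inl e))) (e : G.edgeSet) :
    #{t | (bipRed G).Adj (.inr (.inl e)) t ∧ g t = g (.inr (.inl e))} =
      #{v ∈ (e : Sym2 V).toFinset | g (.inl v) = g (.inr (.inl e))} + G.edgeFinset.card ^ 2 := by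
  have hnbhd : univ.filter (fun t => (bipRed G).Adj (.inr (.inl e)) t ∧ g t = g (.inr (.inl e))) =
      {v ∈ (e : Sym2 V).toFinset | g (.inl v) = g (.inr (.inl e))}.disjSum
        ((∅ : Finset G.edgeSet).disjSum ({e} ×ˢ (univ : Finset (Fin (G.edgeFinset.card ^ 2))))) := by
    ext (v | e' | ⟨e', i⟩) <;> simp only [mem_filter, mem_univ, true_and, inl_mem_disjSum,
      inr_mem_disjSum, Sym2.mem_toFinset, notMem_empty, mem_product, mem_singleton, hg, and_true]
    · exact Iff.rfl
    · exact iff_false_intro fun h => h.1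
    · exact ⟨fun h => Eq.symm h.1, fun h => ⟨h.symm, h ▸ rfl⟩⟩
  rw [hnbhd, card_disjSum, card_disjSum, card_product, card_empty, card_singleton, card_univ,
    Fintype.card_fin, zero_add, one_mul]

lemma sum_card_monoEndpoints_add_le_monoEdges_bipRed
    (g : V ⊕ (↥G.edgeSet ⊕ ↥G.edgeSet × Fin (G.edgeFinset.card ^ 2)) → Bool)
    (hg : ∀ e i, g (.inr (.inr (e, i))) = g (.inr (.inl e))) (c : Bool) (s : Finset G.edgeSet)
    (hs : ∀ e ∈ s, g (.inr (.inl e)) = c) :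
    ∑ e ∈ s, (#{v ∈ e.1.toFinset | g (.inl v) = c} + G.edgeFinset.card ^ 2) ≤
      monoEdges (bipRed G) g c := by
  let y : G.edgeSet ↪ V ⊕ (↥G.edgeSet ⊕ ↥G.edgeSet × Fin (G.edgeFinset.card ^ 2)) :=
    ⟨fun e => .inr (.inl e), fun _ _ h => by simpa using h⟩
  have hindep : (s.map y : Set _).Pairwise fun t t' => ¬ (bipRed G).Adj t t' := by
    intro t ht t' ht' _
    obtain ⟨e, -, rfl⟩ := mem_map.1 ht
    obtain ⟨e', -, rfl⟩ := mem_map.1 ht'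
    exact fun h => h
  calc ∑ e ∈ s, (#{v ∈ e.1.toFinset | g (.inl v) = c} + G.edgeFinset.card ^ 2)
      = ∑ e ∈ s, #{t | (bipRed G).Adj (.inr (.inl e)) t ∧ g t = c} :=
        sum_congr rfl fun e he => by rw [← hs e he, card_monoNeighbors_bipRed G g hg]
    _ = ∑ t ∈ s.map y, #{t' | (bipRed G).Adj t t' ∧ g t' = c} :=
        (sum_map s y fun t => #{t' | (bipRed G).Adj t t' ∧ g t' = c}).symm
    _ ≤ monoEdges (bipRed G) g c := by
        refine sum_card_monoNeighbors_le_monoEdges _ _ _ _ hindep fun t ht => ?_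
        obtain ⟨e, he, rfl⟩ := mem_map.1 ht
        exact hs e he

noncomputable def bipRedColoring (f : V → Bool) :
    V ⊕ (↥G.edgeSet ⊕ ↥G.edgeSet × Fin (G.edgeFinset.card ^ 2)) → Bool
  | .inl v => f v
  | .inr (.inl e) => decide (∀ v ∈ (e : Sym2 V), f v = true)
  | .inr (.inr (e, _)) => decide (∀ v ∈ (e : Sym2 V), f v = true)

lemma bipRedColoring_leaf (f : V → Bool) (e : G.edgeSet) (i : Fin (G.edgeFinset.card ^ 2)) :
    bipRedColoring G f (.inr (.inr (e, i))) = bipRedColoring G f (.inr (.inl e)) := rfl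

lemma two_add_sq_mul_le_monoEdges_bipRedColoring_true (f : V → Bool) :
    (2 + G.edgeFinset.card ^ 2) * monoEdges G f true ≤
      monoEdges (bipRed G) (bipRedColoring G f) true := by
  set R := univ.filter fun e : G.edgeSet => ∀ v ∈ (e : Sym2 V), f v = true
  calc (2 + G.edgeFinset.card ^ 2) * monoEdges G f true
      = ∑ e ∈ R, (#{v ∈ e.1.toFinset | f v = true} + G.edgeFinset.card ^ 2) := by
        rw [← card_filter_edgeSet_eq_monoEdges, mul_comm, ← smul_eq_mul, ← sum_const]
        refine sum_congr rfl fun e he => ?_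
        rw [Sym2.card_filter_toFinset_of_forall (G.not_isDiag_of_mem_edgeSet e.2)
          (mem_filter.1 he).2]
    _ ≤ _ := sum_card_monoEndpoints_add_le_monoEdges_bipRed G (bipRedColoring G f)
        (bipRedColoring_leaf G f) true R
        fun e he => decide_eq_true (mem_filter.1 he).2

lemma sub_mul_one_add_sq_add_le_monoEdges_bipRedColoring_false (f : V → Bool) :
    (G.edgeFinset.card - monoEdges G f true) * (1 + G.edgeFinset.card ^ 2) +
        monoEdges G f false ≤ monoEdges (bipRed G) (bipRedColoring G f) false := by
  set N := univ.filter fun e : G.edgeSet => ¬ ∀ v ∈ (e : Sym2 V), f v = true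
  have hN : #N = G.edgeFinset.card - monoEdges G f true := by
    rw [← G.edgeSet_univ_card, ← card_filter_add_card_filter_not (s := univ)
      fun e : G.edgeSet => ∀ v ∈ (e : Sym2 V), f v = true, card_filter_edgeSet_eq_monoEdges,
      Nat.add_sub_cancel_left]
  have hB : #(N.filter fun e => ∀ v ∈ e.1, f v = false) = monoEdges G f false := by
    rw [← card_filter_edgeSet_eq_monoEdges, filter_filter]
    congr 1
    ext e
    simp only [mem_filter, mem_univ, true_and, and_iff_right_iff_imp]
    intro hblue hred
    have hmem := Sym2.out_fst_mem (e : Sym2 V)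
    exact Bool.false_ne_true ((hblue _ hmem).symm.trans (hred _ hmem))
  calc (G.edgeFinset.card - monoEdges G f true) * (1 + G.edgeFinset.card ^ 2) +
        monoEdges G f false
      = ∑ e ∈ N, (1 + (if ∀ v ∈ e.1, f v = false then 1 else 0) +
          G.edgeFinset.card ^ 2) := by
        rw [sum_add_distrib, sum_add_distrib, ← card_filter, hB, sum_const, sum_const, hN]
        ring
    _ ≤ ∑ e ∈ N, (#{v ∈ e.1.toFinset | f v = false} + G.edgeFinset.card ^ 2) := by
        refine sum_le_sum fun e he => Nat.add_le_add_right ?_ _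
        refine Sym2.one_add_ite_le_card_filter_toFinset (G.not_isDiag_of_mem_edgeSet e.2) ?_
        simpa using (mem_filter.1 he).2
    _ ≤ _ := sum_card_monoEndpoints_add_le_monoEdges_bipRed G (bipRedColoring G f)
        (bipRedColoring_leaf G f) false N
        fun e he => decide_eq_false (mem_filter.1 he).2

end BipRed

theorem bipartite_reduction_forward_general {V : Type*} [Fintype V] (G : SimpleGraph V)
    (k₁ k₂ : ℕ) (f : V → Bool)
    (hred : monoEdges G f true = k₁) (hblue : monoEdges G f false = k₂) :
    ∃ g : V ⊕ (↥G.edgeSet ⊕ ↥G.edgeSet × Fin (G.edgeFinset.card ^ 2)) → Bool,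
      monoEdges (bipRed G) g true ≥
        2 * k₁ + k₁ * G.edgeFinset.card ^ 2 ∧
      monoEdges (bipRed G) g false ≥
        (G.edgeFinset.card + k₂ - k₁) +
          (G.edgeFinset.card - k₁) * G.edgeFinset.card ^ 2 := by
  have hk₁ : k₁ ≤ G.edgeFinset.card := hred ▸ card_filter_le _ _
  refine ⟨bipRedColoring G f, ?_, ?_⟩
  · have := two_add_sq_mul_le_monoEdges_bipRedColoring_true G f
    rw [hred] at this
    linarith
  · have := sub_mul_one_add_sq_add_le_monoEdges_bipRedColoring_false G f
    rw [hred, hblue, mul_one_add] at this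
    omega

theorem bipartite_reduction_forward {V : Type*} [Fintype V] (G : SimpleGraph V)
    (k₁ k₂ : ℕ) (hk : k₁ ≤ k₂) (f : V → Bool)
    (hred : monoEdges G f true = k₁) (hblue : monoEdges G f false = k₂) :
    ∃ g : V ⊕ (↥G.edgeSet ⊕ ↥G.edgeSet × Fin (G.edgeFinset.card ^ 2)) → Bool,
      monoEdges (bipRed G) g true ≥
        2 * k₁ + k₁ * G.edgeFinset.card ^ 2 ∧
      monoEdges (bipRed G) g false ≥
        (G.edgeFinset.card + k₂ - k₁) +
          (G.edgeFinset.card - k₁) * G.edgeFinset.card ^ 2 :=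
  bipartite_reduction_forward_general G k₁ k₂ f hred hblue
end

section
/- Let G be a graph with m edges and H the bipartite graph with vertices x_v (v ∈ V(G)), y_e (e ∈ E(G)) adjacent to the two x-vertices of its endpoints, and m² leaves attached to each y_e. If H has a 2-coloring g with at least 2k₁ + k₁m² red edges and at least (m + k₂ - k₁) + (m - k₁)m² blue edges, where k₁ + k₂ ≤ m and k₂ ≥ k₁, then G has a 2-coloring with at least k₁ red edges and at least k₂ blue edges. -/
open Finset

attribute [local instance] Classical.propDecidable

/-! Write `m = #E(G)`. For a color `c`, let `t_c` be the number of vertices `y_e` colored `c`,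
and `a_c` the number of those for which both endpoints of `e` are colored `c` as well. Every edge
of `H` contains exactly one `y_e`, and a `y_e` colored `c` lies in at most `m² + 2` edges of
color `c`, only `m² + 1` of them unless it counts for `a_c`. Hence `H` has at most
`(m² + 1) t_c + a_c` edges of color `c`. Since `a_c ≤ t_c`, `t_red + t_blue = m` and `m ≤ m²`,
the two hypotheses force `t_red = k₁` and `t_blue = m - k₁`, and then `a_red ≥ k₁` and
`a_blue ≥ k₂`. Restricting `g` to the `x`-vertices gives the coloring of `G`. -/

theorem le_and_le_of_weighted_bounds {m M t t' a b k₁ k₂ : ℕ} (hmM : m ≤ M)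
    (htt' : t + t' = m) (ha : a ≤ t) (hb : b ≤ t')
    (hred : 2 * k₁ + k₁ * M ≤ (M + 1) * t + a)
    (hblue : (m + k₂ - k₁) + (m - k₁) * M ≤ (M + 1) * t' + b) : k₁ ≤ a ∧ k₂ ≤ b := by
  have hk₁t : k₁ ≤ t := by
    by_contra! h
    nlinarith
  obtain ⟨d, rfl⟩ : ∃ d, m = k₁ + d := ⟨m - k₁, by omega⟩
  rw [show k₁ + d + k₂ - k₁ = d + k₂ by omega, show k₁ + d - k₁ = d by omega] at hblue
  have hdt' : d ≤ t' := by
    by_contra! h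
    nlinarith
  obtain rfl : t = k₁ := by omega
  obtain rfl : t' = d := by omega
  constructor <;> nlinarith

theorem Sym2.card_filter_mem_le {α : Type*} [Fintype α] (z : Sym2 α) (p : α → Prop)
    [DecidablePred p] : #{a | a ∈ z ∧ p a} ≤ if ∀ a ∈ z, p a then 2 else 1 := by
  induction z using Sym2.ind with
  | _ a b =>
    have hsub : ({x | x ∈ s(a, b) ∧ p x} : Finset α) ⊆ {a, b} := fun x => by simp +contextual
    split_ifs with h
    · exact (card_le_card hsub).trans card_le_two
    · obtain ⟨x, hx, hpx⟩ := not_forall₂.1 h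
      have hx' : x ∈ ({a, b} : Finset α) := by simpa using hx
      calc #{x | x ∈ s(a, b) ∧ p x} ≤ #(({a, b} : Finset α).erase x) :=
            card_le_card fun y hy => mem_erase.2
              ⟨fun hyx => hpx (hyx ▸ (mem_filter.1 hy).2.2), hsub hy⟩
        _ = #({a, b} : Finset α) - 1 := card_erase_of_mem hx'
        _ ≤ 1 := Nat.sub_le_sub_right card_le_two 1

namespace SimpleGraph

variable {V : Type*} [Fintype V] (G : SimpleGraph V)

theorem monoEdges_le_card (f : V → Bool) (c : Bool) {t : Finset (Sym2 V)}
    (h : ∀ e ∈ G.edgeFinset, (∀ v ∈ e, f v = c) → e ∈ t) : monoEdges G f c ≤ #t :=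
  card_le_card fun e he => by rw [mem_filter] at he; exact h e he.1 he.2

theorem card_filter_mono_le_monoEdges (S : Finset G.edgeSet) (f : V → Bool) (c : Bool) :
    #{e ∈ S | ∀ v ∈ e.1, f v = c} ≤ monoEdges G f c :=
  card_le_card_of_injOn (fun e => (e : Sym2 V))
    (fun e he => by
      rw [coe_filter] at he
      simpa [monoEdges] using he.2)
    Subtype.val_injective.injOn

variable (g : V ⊕ (G.edgeSet ⊕ G.edgeSet × Fin (#G.edgeFinset ^ 2)) → Bool)

noncomputable def yColorClass (c : Bool) : Finset G.edgeSet :=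
  {e | g (.inr (.inl e)) = c}

theorem card_yColorClass_true_add_false :
    #(G.yColorClass g true) + #(G.yColorClass g false) = #G.edgeFinset := by
  simpa [yColorClass, G.edgeFinset_card] using
    card_filter_add_card_filter_not (s := univ) fun e : G.edgeSet => g (.inr (.inl e)) = true

theorem monoEdges_bipRed_le (c : Bool) :
    monoEdges (bipRed G) g c ≤
      (#G.edgeFinset ^ 2 + 1) * #(G.yColorClass g c) +
        #{e ∈ G.yColorClass g c | ∀ v ∈ e.1, g (.inl v) = c} := by
  set T := G.yColorClass g c
  set spokes := T.sigma fun e => ({v | v ∈ e.1 ∧ g (.inl v) = c} : Finset V)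
  set leaves := T ×ˢ (univ : Finset (Fin (#G.edgeFinset ^ 2)))
  have hcover : ∀ s ∈ (bipRed G).edgeFinset, (∀ v ∈ s, g v = c) →
      s ∈ spokes.image (fun p => s(.inr (.inl p.1), .inl p.2)) ∪
        leaves.image fun q => s(.inr (.inl q.1), .inr (.inr q)) := by
    intro s hs hmono
    rw [mem_edgeFinset] at hs
    induction s using Sym2.ind with | _ x y =>
    rcases x with u | e | ⟨e, i⟩ <;> rcases y with v | e' | ⟨e', j⟩ <;>
      simp_all [bipRed, spokes, leaves, T, yColorClass]
  have hspokes : #spokes ≤ #T + #{e ∈ T | ∀ v ∈ e.1, g (.inl v) = c} := by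
    rw [card_sigma]
    calc ∑ e ∈ T, #{v | v ∈ e.1 ∧ g (.inl v) = c}
        ≤ ∑ e ∈ T, (1 + if ∀ v ∈ e.1, g (.inl v) = c then 1 else 0) :=
          sum_le_sum fun e _ => (Sym2.card_filter_mem_le _ _).trans (by split_ifs <;> omega)
      _ = #T + #{e ∈ T | ∀ v ∈ e.1, g (.inl v) = c} := by
          rw [sum_add_distrib, sum_boole]; simp
  have hleaves : #leaves = #T * #G.edgeFinset ^ 2 := by
    rw [card_product, card_univ, Fintype.card_fin]
  calc monoEdges (bipRed G) g c
      ≤ #spokes + #leaves :=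
        ((bipRed G).monoEdges_le_card g c hcover).trans <|
          (card_union_le _ _).trans <| add_le_add card_image_le card_image_le
    _ ≤ _ := by rw [hleaves]; linarith

end SimpleGraph

theorem bipartite_reduction_reverse_general {V : Type*} [Fintype V] (G : SimpleGraph V)
    (k₁ k₂ : ℕ)
    (g : V ⊕ (↥G.edgeSet ⊕ ↥G.edgeSet × Fin (G.edgeFinset.card ^ 2)) → Bool)
    (hred : monoEdges (bipRed G) g true ≥
      2 * k₁ + k₁ * G.edgeFinset.card ^ 2)
    (hblue : monoEdges (bipRed G) g false ≥
      (G.edgeFinset.card + k₂ - k₁) +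
        (G.edgeFinset.card - k₁) * G.edgeFinset.card ^ 2) :
    ∃ f : V → Bool,
      monoEdges G f true ≥ k₁ ∧ monoEdges G f false ≥ k₂ := by
  obtain ⟨hk₁, hk₂⟩ := le_and_le_of_weighted_bounds (Nat.le_self_pow two_ne_zero _)
    (G.card_yColorClass_true_add_false g)
    (card_filter_le _ _) (card_filter_le _ _) (hred.trans (G.monoEdges_bipRed_le g true))
    (hblue.trans (G.monoEdges_bipRed_le g false))
  exact ⟨fun v => g (.inl v), hk₁.trans (G.card_filter_mono_le_monoEdges _ _ true),
    hk₂.trans (G.card_filter_mono_le_monoEdges _ _ false)⟩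

theorem bipartite_reduction_reverse {V : Type*} [Fintype V] (G : SimpleGraph V)
    (k₁ k₂ : ℕ) (hk : k₁ ≤ k₂) (hkm : k₁ + k₂ ≤ G.edgeFinset.card)
    (g : V ⊕ (↥G.edgeSet ⊕ ↥G.edgeSet × Fin (G.edgeFinset.card ^ 2)) → Bool)
    (hred : monoEdges (bipRed G) g true ≥
      2 * k₁ + k₁ * G.edgeFinset.card ^ 2)
    (hblue : monoEdges (bipRed G) g false ≥
      (G.edgeFinset.card + k₂ - k₁) +
        (G.edgeFinset.card - k₁) * G.edgeFinset.card ^ 2) :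
    ∃ f : V → Bool,
      monoEdges G f true ≥ k₁ ∧ monoEdges G f false ≥ k₂ :=
  bipartite_reduction_reverse_general G k₁ k₂ g hred hblue
end
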